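/- If A is a semiprimary ring, then every ℵ₀-distributive right A-module is both Artinian and Noetherian. -/

import Mathlib

universe u

open Submodule

/-- A module `M` is `ℵ₀`-distributive if no subfactor of `M` (quotient of a submodule)
is (isomorphic to) a direct sum of infinitely many pairwise isomorphic simple modules.
The direct sum condition is phrased internally: the subfactor has no independent spanning
family, indexed by an infinite type, of pairwise isomorphic simple submodules. -/
def IsAleph0Distributive (R M : Type u) [Ring R] [AddCommGroup M] [Module R M] : Prop :=
  ¬ ∃ (N : Submodule R M) (P : Submodule R N) (ι : Type u) (_ : Infinite ι)
      (T : ι → Submodule R (N ⧸ P)),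
      iSupIndep T ∧ iSup T = ⊤ ∧ (∀ i, IsSimpleModule R (T i)) ∧
        ∀ i j, Nonempty ((T i) ≃ₗ[R] (T j))

/-- A module is distributive if its lattice of submodules is distributive. -/
def IsDistributiveModule (R M : Type u) [Ring R] [AddCommGroup M] [Module R M] : Prop :=
  ∀ X Y Z : Submodule R M, X ⊓ (Y ⊔ Z) = X ⊓ Y ⊔ X ⊓ Z

/-- A module is completely cyclic if every submodule is cyclic. -/
def IsCompletelyCyclic (R M : Type u) [Ring R] [AddCommGroup M] [Module R M] : Prop :=
  ∀ N : Submodule R M, ∃ m : M, N = span R {m}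

/-- A module is Bezout if every finitely generated submodule is cyclic. -/
def IsBezoutModule (R M : Type u) [Ring R] [AddCommGroup M] [Module R M] : Prop :=
  ∀ N : Submodule R M, N.FG → ∃ m : M, N = span R {m}

/-- A ring satisfies the minimum condition on principal right ideals if there is no
infinite strictly descending chain of principal right ideals. -/
def MinPrincipalRight (A : Type u) [Ring A] : Prop :=
  ¬ ∃ a : ℕ → A, StrictAnti fun n => span Aᵐᵒᵖ ({a n} : Set A)

/-- A ring satisfies the minimum condition on principal left ideals if there is no
infinite strictly descending chain of principal left ideals. -/
def MinPrincipalLeft (A : Type u) [Ring A] : Prop :=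
  ¬ ∃ a : ℕ → A, StrictAnti fun n => span A ({a n} : Set A)

/-- A module is indecomposable if it is nonzero and is not the direct sum of two
nonzero submodules. -/
def IsIndecomposableModule (R M : Type u) [Ring R] [AddCommGroup M] [Module R M] : Prop :=
  Nontrivial M ∧ ∀ N P : Submodule R M, IsCompl N P → N = ⊥ ∨ P = ⊥

/-- A ring `A` has (right) finite representation type if it is right Artinian and has,
up to isomorphism, only finitely many finitely generated indecomposable right modules
(every finitely generated module is isomorphic to a quotient of some `Aⁿ`, so the
representatives may be taken of this form). -/
def HasFiniteRepresentationType (A : Type u) [Ring A] : Prop :=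
  IsArtinian Aᵐᵒᵖ A ∧
    ∃ (n : ℕ) (k : Fin n → ℕ) (N : ∀ i, Submodule Aᵐᵒᵖ (Fin (k i) → A)),
      ∀ (M : Type u) [AddCommGroup M] [Module Aᵐᵒᵖ M],
        Module.Finite Aᵐᵒᵖ M → IsIndecomposableModule Aᵐᵒᵖ M →
          ∃ i, Nonempty (M ≃ₗ[Aᵐᵒᵖ] ((Fin (k i) → A) ⧸ N i))

/-- `M` has only finitely many simple subfactors up to isomorphism. -/
def FinitelyManySimpleSubfactors (R M : Type u) [Ring R] [AddCommGroup M] [Module R M] : Prop :=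
  ∃ (n : ℕ) (N : Fin n → Submodule R M) (P : ∀ i, Submodule R (N i)),
    ∀ (N' : Submodule R M) (P' : Submodule R N'), IsSimpleModule R (N' ⧸ P') →
      ∃ i, Nonempty ((N' ⧸ P') ≃ₗ[R] (N i ⧸ P i))

/-- A module is semi-Artinian if every nonzero quotient module contains a simple submodule. -/
def IsSemiArtinianModule (R M : Type u) [Ring R] [AddCommGroup M] [Module R M] : Prop :=
  ∀ N : Submodule R M, N ≠ ⊤ → ∃ S : Submodule R (M ⧸ N), IsSimpleModule R S

/-- A ring is semilocal if its quotient by the Jacobson radical is semisimple. -/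
def IsSemilocalRing (A : Type u) [Ring A] : Prop :=
  IsSemisimpleModule A (A ⧸ Ideal.jacobson (⊥ : Ideal A))

/-- A ring is semiprimary if it is semilocal and its Jacobson radical is nilpotent. -/
def IsSemiprimaryRing' (A : Type u) [Ring A] : Prop :=
  IsSemilocalRing A ∧ ∃ n : ℕ, 0 < n ∧ ∀ f : Fin n → A,
    (∀ i, f i ∈ Ideal.jacobson (⊥ : Ideal A)) → (List.ofFn f).prod = 0

/-!
Right `A`-modules are modules over `Aᵐᵒᵖ`, which is again semiprimary since the Jacobson radical
is left–right symmetric. Over a semiprimary ring `R` with radical `J`, a module is filtered by the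
`Jᵏ M`, and each layer is a semisimple module killed by `J`. Its simple summands are quotients of
the semisimple module `R ⧸ J` of finite length, so they fall into finitely many isomorphism
classes; infinitely many summands would therefore contain an infinite family of pairwise
isomorphic ones, a subfactor that `ℵ₀`-distributivity forbids. So every layer, and hence `M`, has
finite length.
-/

open MulOpposite

namespace Ring

variable {R : Type*} [Ring R]

theorem exists_mul_one_add_eq_one_of_mem_jacobson {u : R} (hu : u ∈ jacobson R) :
    ∃ z, z * (1 + u) = 1 := by
  rw [← Ideal.jacobson_bot] at hu
  obtain ⟨z, hz⟩ := Ideal.mem_jacobson_iff.mp hu 1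
  rw [Submodule.mem_bot, mul_one, sub_eq_zero] at hz
  exact ⟨z, by rw [mul_one_add, add_comm, hz]⟩

theorem isUnit_one_add_of_mem_jacobson {u : R} (hu : u ∈ jacobson R) : IsUnit (1 + u) := by
  obtain ⟨z, hz⟩ := exists_mul_one_add_eq_one_of_mem_jacobson hu
  -- `z = 1 - z u` has a left inverse too, so `z` is a unit and its inverse is `1 + u`.
  have hz' : z = 1 + -(z * u) := by rw [← hz]; noncomm_ring
  obtain ⟨w, hw⟩ :=
    exists_mul_one_add_eq_one_of_mem_jacobson (neg_mem (Ideal.mul_mem_left _ z hu))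
  rw [← hz'] at hw
  have hwu : w = 1 + u :=
    calc w = w * (z * (1 + u)) := by rw [hz, mul_one]
      _ = 1 + u := by rw [← mul_assoc, hw, one_mul]
  exact isUnit_iff_exists.mpr ⟨z, hwu ▸ hw, hz⟩

theorem op_mem_jacobson {x : R} (hx : x ∈ jacobson R) : op x ∈ jacobson Rᵐᵒᵖ := by
  rw [← Ideal.jacobson_bot, Ideal.mem_jacobson_iff]
  intro y
  obtain ⟨v, hv⟩ :=
    (isUnit_one_add_of_mem_jacobson (Ideal.mul_mem_right (unop y) _ hx)).exists_right_inv
  refine ⟨op v, ?_⟩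
  rw [Submodule.mem_bot, sub_eq_zero, ← op_unop y, ← op_mul, ← op_mul, ← op_add, ← op_one,
    op_inj, ← hv]
  noncomm_ring

theorem op_mem_jacobson_iff {x : R} : op x ∈ jacobson Rᵐᵒᵖ ↔ x ∈ jacobson R := by
  refine ⟨fun hx => ?_, op_mem_jacobson⟩
  let e : Rᵐᵒᵖᵐᵒᵖ →+* R := (RingEquiv.opOp R).symm
  have : RingHomSurjective e := ⟨(RingEquiv.opOp R).symm.surjective⟩
  exact le_comap_jacobson e (op_mem_jacobson hx)

end Ring

theorem List.reverse_ofFn {α : Type*} {n : ℕ} (g : Fin n → α) :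
    (List.ofFn g).reverse = List.ofFn fun i => g i.rev := by
  refine List.ext_getElem (by simp) fun i _ _ => ?_
  simp only [List.getElem_reverse, List.getElem_ofFn, List.length_ofFn]
  congr 1; ext; simp; omega

theorem Ideal.pow_eq_bot_iff_forall_prod_eq_zero {R : Type*} [Ring R] {I : Ideal R} {n : ℕ}
    (hn : n ≠ 0) :
    I ^ n = ⊥ ↔ ∀ f : Fin n → R, (∀ i, f i ∈ I) → (List.ofFn f).prod = 0 := by
  rw [← Submodule.restrictScalars_inj ℕ, Submodule.restrictScalars_pow hn,
    Submodule.pow_eq_span_pow_set, Submodule.restrictScalars_bot, Submodule.span_eq_bot]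
  simp only [Set.mem_pow, forall_exists_index, forall_apply_eq_imp_iff]
  exact ⟨fun h f hf => h fun i => ⟨f i, hf i⟩, fun h f => h _ fun i => (f i).2⟩

theorem Ideal.isSemisimpleModule_quotient_iff {R : Type*} [Ring R] (I : Ideal R) [I.IsTwoSided] :
    IsSemisimpleModule R (R ⧸ I) ↔ IsSemisimpleRing (R ⧸ I) :=
  LinearMap.isSemisimpleModule_iff_of_bijective (σ := Ideal.Quotient.mk I)
    { toFun := id, map_add' := fun _ _ => rfl, map_smul' := fun _ _ => rfl } Function.bijective_id

instance IsSemiprimaryRing.mulOpposite {R : Type*} [Ring R] [IsSemiprimaryRing R] :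
    IsSemiprimaryRing Rᵐᵒᵖ where
  isSemisimpleRing := by
    let f : R →+* (Rᵐᵒᵖ ⧸ Ring.jacobson Rᵐᵒᵖ)ᵐᵒᵖ :=
      (RingHom.op (Ideal.Quotient.mk _)).comp (RingEquiv.opOp R).toRingHom
    let g := Ideal.Quotient.lift (Ring.jacobson R) f fun a ha => by
      simpa [f, Ideal.Quotient.eq_zero_iff_mem] using Ring.op_mem_jacobson ha
    have hg : Function.Surjective g := by
      intro y
      obtain ⟨x, hx⟩ := Ideal.Quotient.mk_surjective (unop y)
      exact ⟨Ideal.Quotient.mk _ (unop x), by simp [g, f, hx]⟩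
    have := g.isSemisimpleRing_of_surjective hg
    exact isSemisimpleRing_mulOpposite_iff.mp this
  isNilpotent := by
    obtain ⟨n, hn⟩ := IsSemiprimaryRing.isNilpotent (R := R)
    have hn' : Ring.jacobson R ^ (n + 1) = ⊥ := by
      rw [Submodule.pow_succ, hn, Submodule.zero_eq_bot, Submodule.bot_mul]
    refine ⟨n + 1, (Ideal.pow_eq_bot_iff_forall_prod_eq_zero n.succ_ne_zero).mpr fun f hf => ?_⟩
    apply unop_injective
    rw [unop_list_prod, List.map_ofFn, List.reverse_ofFn, unop_zero]
    exact (Ideal.pow_eq_bot_iff_forall_prod_eq_zero n.succ_ne_zero).mp hn' _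
      fun i => Ring.op_mem_jacobson_iff.mp (hf i.rev)

theorem IsSemiprimaryRing'.isSemiprimaryRing {A : Type u} [Ring A] (h : IsSemiprimaryRing' A) :
    IsSemiprimaryRing A := by
  obtain ⟨hss, n, hn, hnil⟩ := h
  rw [IsSemilocalRing, Ideal.jacobson_bot] at hss
  rw [Ideal.jacobson_bot] at hnil
  exact ⟨(Ideal.isSemisimpleModule_quotient_iff _).mp hss,
    ⟨n, (Ideal.pow_eq_bot_iff_forall_prod_eq_zero hn.ne').mpr hnil⟩⟩

section Aleph0Distributive

variable {R : Type u} [Ring R] {M X Y : Type u} [AddCommGroup M] [Module R M]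
  [AddCommGroup X] [Module R X] [AddCommGroup Y] [Module R Y]

def IsInfiniteIsotypicSum (R X : Type u) [Ring R] [AddCommGroup X] [Module R X] : Prop :=
  ∃ (ι : Type u) (_ : Infinite ι) (T : ι → Submodule R X),
    iSupIndep T ∧ iSup T = ⊤ ∧ (∀ i, IsSimpleModule R (T i)) ∧ ∀ i j, Nonempty (T i ≃ₗ[R] T j)

theorem IsInfiniteIsotypicSum.of_linearEquiv (e : X ≃ₗ[R] Y) (h : IsInfiniteIsotypicSum R X) :
    IsInfiniteIsotypicSum R Y := by
  obtain ⟨ι, _, T, hind, htop, hsimple, hiso⟩ := h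
  refine ⟨ι, ‹_›, fun i => orderIsoMapComap e (T i), hind.map_orderIso (orderIsoMapComap e), ?_,
    fun i => .congr (e.submoduleMap (T i)).symm, fun i j => (hiso i j).map fun f =>
      (e.submoduleMap (T i)).symm.trans (f.trans (e.submoduleMap (T j)))⟩
  rw [← OrderIso.map_iSup, htop, OrderIso.map_top]

theorem isInfiniteIsotypicSum_iSup {ι : Type u} [Infinite ι] (T : ι → Submodule R X)
    (hind : iSupIndep T) (hsimple : ∀ i, IsSimpleModule R (T i))
    (hiso : ∀ i j, Nonempty (T i ≃ₗ[R] T j)) : IsInfiniteIsotypicSum R ↥(⨆ i, T i) := by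
  set p := ⨆ i, T i
  have hle : ∀ i, T i ≤ p := le_iSup T
  let t : ι → Set.Iic p := fun i => ⟨T i, hle i⟩
  refine ⟨ι, ‹_›, fun i => (T i).comap p.subtype,
    (iSupIndep.of_coe_Iic_comp (t := t) hind).map_orderIso p.mapIic.symm, ?_,
    fun i => .congr (comapSubtypeEquivOfLe (hle i)), fun i j => (hiso i j).map fun f =>
      (comapSubtypeEquivOfLe (hle i)).trans (f.trans (comapSubtypeEquivOfLe (hle j)).symm)⟩
  have ht : ⨆ i, t i = ⊤ := Subtype.ext (by rw [Set.Iic.coe_iSup]; rfl)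
  change ⨆ i, p.mapIic.symm (t i) = ⊤
  rw [← OrderIso.map_iSup, ht, OrderIso.map_top]

theorem IsAleph0Distributive.not_isInfiniteIsotypicSum (h : IsAleph0Distributive R M)
    {Z : Type u} [AddCommGroup Z] [Module R Z] (i : Z →ₗ[R] M) (hi : Function.Injective i)
    (f : Z →ₗ[R] X) (hf : Function.Surjective f) : ¬ IsInfiniteIsotypicSum R X := by
  intro hX
  let g := f ∘ₗ (LinearEquiv.ofInjective i hi).symm.toLinearMap
  have hg : Function.Surjective g := hf.comp (LinearEquiv.surjective _)
  exact h ⟨LinearMap.range i, LinearMap.ker g,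
    hX.of_linearEquiv (g.quotKerEquivOfSurjective hg).symm⟩

theorem IsAleph0Distributive.submodule (h : IsAleph0Distributive R M) (N : Submodule R M) :
    IsAleph0Distributive R N := fun ⟨N₁, P₁, hX⟩ =>
  h.not_isInfiniteIsotypicSum (N.subtype ∘ₗ N₁.subtype)
    (N.injective_subtype.comp N₁.injective_subtype) P₁.mkQ P₁.mkQ_surjective hX

theorem IsAleph0Distributive.quotient (h : IsAleph0Distributive R M) (N : Submodule R M) :
    IsAleph0Distributive R (M ⧸ N) := fun ⟨N₁, P₁, hX⟩ => by
  let r : N₁.comap N.mkQ →ₗ[R] N₁ := N.mkQ.restrict fun _ hx => hx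
  have hr : Function.Surjective r := fun ⟨y, hy⟩ => by
    obtain ⟨x, rfl⟩ := N.mkQ_surjective y
    exact ⟨⟨x, hy⟩, rfl⟩
  exact h.not_isInfiniteIsotypicSum (N₁.comap N.mkQ).subtype (injective_subtype _)
    (P₁.mkQ ∘ₗ r) (P₁.mkQ_surjective.comp hr) hX

end Aleph0Distributive

section SemisimpleLayer

variable {R : Type u} [Ring R] {M Y V : Type u} [AddCommGroup M] [Module R M]
  [AddCommGroup Y] [Module R Y] [AddCommGroup V] [Module R V]

theorem exists_linearEquiv_mem_of_surjective {t : Set (Submodule R Y)}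
    [∀ W : t, IsSimpleModule R W] (ht : sSup t = ⊤) [IsSimpleModule R V] (f : Y →ₗ[R] V)
    (hf : Function.Surjective f) : ∃ W ∈ t, Nonempty (V ≃ₗ[R] W) := by
  have : IsSemisimpleModule R Y := isSemisimpleModule_of_isSemisimpleModule_submodule'
    (p := fun W : t => W.1) (fun _ => inferInstance) (by rw [← sSup_eq_iSup', ht])
  obtain ⟨C, hC⟩ := exists_isCompl (LinearMap.ker f)
  let e : V ≃ₗ[R] C := (f.quotKerEquivOfSurjective hf).symm.trans (quotientEquivOfIsCompl _ C hC)
  have := IsSimpleModule.congr e.symm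
  obtain ⟨W, hW, ⟨e'⟩⟩ := C.linearEquiv_of_sSup_eq_top t ht
  exact ⟨W, hW, ⟨e.trans e'⟩⟩

theorem exists_linearEquiv_mem_of_isTorsionBySet {I : Ideal R} {t : Set (Submodule R (R ⧸ I))}
    [∀ W : t, IsSimpleModule R W] (ht : sSup t = ⊤) [IsSimpleModule R V]
    (hV : Module.IsTorsionBySet R V I) : ∃ W ∈ t, Nonempty (V ≃ₗ[R] W) := by
  have := IsSimpleModule.nontrivial R V
  obtain ⟨v, hv⟩ := exists_ne (0 : V)
  let f := I.liftQ (LinearMap.toSpanSingleton R V v) fun a ha =>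
    LinearMap.mem_ker.mpr (@hV v ⟨a, ha⟩)
  have hf : Function.Surjective (f ∘ I.mkQ) := IsSimpleModule.toSpanSingleton_surjective R hv
  exact exists_linearEquiv_mem_of_surjective ht f hf.of_comp

theorem IsAleph0Distributive.finite_of_sSupIndep {I : Ideal R} [IsSemisimpleModule R (R ⧸ I)]
    (hM : Module.IsTorsionBySet R M I) (h : IsAleph0Distributive R M) {s : Set (Submodule R M)}
    (hs_ind : sSupIndep s) (hs_simple : ∀ m ∈ s, IsSimpleModule R m) : s.Finite := by
  obtain ⟨t, ht_ind, ht, ht_simple⟩ :=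
    IsSemisimpleModule.exists_sSupIndep_sSup_simples_eq_top R (R ⧸ I)
  have : ∀ W : t, IsSimpleModule R W := fun W => ht_simple W W.2
  have : Finite t := (WellFoundedLT.finite_of_sSupIndep ht_ind).to_subtype
  by_contra hinf
  have : Infinite s := Set.infinite_coe_iff.mpr hinf
  have hclass : ∀ m : s, ∃ W : t, Nonempty (m.1 ≃ₗ[R] W) := fun m => by
    have := hs_simple m m.2
    obtain ⟨W, hW, e⟩ := exists_linearEquiv_mem_of_isTorsionBySet (V := m.1) ht
      fun x a => Subtype.ext (@hM x a)
    exact ⟨⟨W, hW⟩, e⟩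
  choose c hc using hclass
  obtain ⟨W, hW⟩ := Finite.exists_infinite_fiber c
  let T : c ⁻¹' {W} → Submodule R M := fun m => m.1
  have hT : ∀ m, Nonempty (T m ≃ₗ[R] W) := fun m => m.2 ▸ hc m
  refine h.not_isInfiniteIsotypicSum (⨆ m, T m).subtype (injective_subtype _) LinearMap.id
    Function.surjective_id (isInfiniteIsotypicSum_iSup T ?_ (fun m => hs_simple _ m.1.2)
      fun m m' => ?_)
  · exact ((sSupIndep_iff s).mp hs_ind).comp Subtype.val_injective
  · obtain ⟨e⟩ := hT m
    obtain ⟨e'⟩ := hT m'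
    exact ⟨e.trans e'.symm⟩

theorem IsAleph0Distributive.isNoetherian_of_isTorsionBySet {I : Ideal R}
    [IsSemisimpleModule R (R ⧸ I)] [IsSemisimpleModule R M] (hM : Module.IsTorsionBySet R M I)
    (h : IsAleph0Distributive R M) : IsNoetherian R M := by
  obtain ⟨s, hs_ind, hs, hs_simple⟩ := IsSemisimpleModule.exists_sSupIndep_sSup_simples_eq_top R M
  have hfin : ∃ s : Set (Submodule R M), s.Finite ∧ sSupIndep s ∧ sSup s = ⊤ ∧
      ∀ m ∈ s, IsSimpleModule R m :=
    ⟨s, h.finite_of_sSupIndep hM hs_ind hs_simple, hs_ind, hs, hs_simple⟩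
  exact ((IsSemisimpleModule.finite_tfae (R := R) (M := M)).out 4 1).mp hfin

end SemisimpleLayer

theorem IsAleph0Distributive.isNoetherian {R M : Type u} [Ring R] [IsSemiprimaryRing R]
    [AddCommGroup M] [Module R M] (h : IsAleph0Distributive R M) : IsNoetherian R M := by
  refine IsSemiprimaryRing.induction R R M
    (P := fun M _ _ _ => IsAleph0Distributive R M → IsNoetherian R M) ?_ ?_ h
  · intro M _ _ _ _ _ hJ hM
    have : IsSemisimpleModule R (R ⧸ Ring.jacobson R) :=
      (Ideal.isSemisimpleModule_quotient_iff _).mpr inferInstance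
    exact hM.isNoetherian_of_isTorsionBySet hJ
  · intro M _ _ _ _ N hN hQ hM
    exact (isNoetherian_iff_submodule_quotient N).mpr ⟨hN (hM.submodule N), hQ (hM.quotient N)⟩

theorem stmt15 (A : Type u) [Ring A] (hA : IsSemiprimaryRing' A)
    (M : Type u) [AddCommGroup M] [Module Aᵐᵒᵖ M] (hM : IsAleph0Distributive Aᵐᵒᵖ M) :
    IsArtinian Aᵐᵒᵖ M ∧ IsNoetherian Aᵐᵒᵖ M := by
  have := hA.isSemiprimaryRing
  have hN : IsNoetherian Aᵐᵒᵖ M := hM.isNoetherian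
  exact ⟨IsSemiprimaryRing.isNoetherian_iff_isArtinian.mp hN, hN⟩
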